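/- arXiv:2104.02943 — 2 statements merged into one kernel-verified Lean document; each statement's English description precedes it below -/
import Mathlib

section
/- Let s : ℝ^d → ℝ be a scoring function such that F_s admits a Lebesgue density f_s which is differentiable with |f_s'(t)| ≤ M for all t, and let φ : [0,1] → ℝ be continuously differentiable with ‖φ'‖_∞ = sup_{u∈[0,1]}|φ'(u)|. Let K : ℝ → ℝ be a nonnegative integrable kernel with K(−u) = K(u), ∫ K(u) du = 1 and μ₂ := ∫ u²·K(u) du < ∞, set κ(t) = ∫_{−∞}^t K(u) du, F̃_{s,h}(t) = ∫ κ((t−u)/h) dF_s(u) for h > 0, and define the smoothed ranking criterion W̃_{φ,h}(s) = E[φ(F̃_{s,h}(s(X)))]. Then for every h > 0, |W̃_{φ,h}(s) − W_φ(s)| ≤ ‖φ'‖_∞·(M/2)·h²·μ₂. -/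
open MeasureTheory

noncomputable section

/-- cdf of the image of `μ` by the scoring function `s`. -/
def scoreCDF {d : ℕ} (μ : Measure (Fin d → ℝ)) (s : (Fin d → ℝ) → ℝ) (t : ℝ) : ℝ :=
  ((μ.map s) (Set.Iic t)).toReal

/-- pooled cdf `F_s = p G_s + (1-p) H_s`. -/
def pooledCDF {d : ℕ} (G H : Measure (Fin d → ℝ)) (p : ℝ) (s : (Fin d → ℝ) → ℝ)
    (t : ℝ) : ℝ :=
  p * scoreCDF G s t + (1 - p) * scoreCDF H s t

/-- `W_φ`-ranking performance of `s` : `E[φ(F_s(s(X)))]` with `X ~ G`. -/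
def Wperf {d : ℕ} (G H : Measure (Fin d → ℝ)) (p : ℝ) (φ : ℝ → ℝ)
    (s : (Fin d → ℝ) → ℝ) : ℝ :=
  ∫ x, φ (pooledCDF G H p s (s x)) ∂G

/-- kernel-smoothed pooled cdf `F̃_{s,h}(t) = ∫ κ((t−u)/h) dF_s(u)`, where
`κ(t) = ∫_{−∞}^t K` and `F_s = p·s_#G + (1−p)·s_#H`. -/
def smoothedCDF {d : ℕ} (G H : Measure (Fin d → ℝ)) (p : ℝ) (s : (Fin d → ℝ) → ℝ)
    (K : ℝ → ℝ) (h t : ℝ) : ℝ :=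
  ∫ u, (∫ v in Set.Iic ((t - u) / h), K v)
    ∂(ENNReal.ofReal p • G.map s + ENNReal.ofReal (1 - p) • H.map s)

/-- smoothed ranking criterion `W̃_{φ,h}(s) = E[φ(F̃_{s,h}(s(X)))]`. -/
def Wsmooth {d : ℕ} (G H : Measure (Fin d → ℝ)) (p : ℝ) (φ : ℝ → ℝ)
    (s : (Fin d → ℝ) → ℝ) (K : ℝ → ℝ) (h : ℝ) : ℝ :=
  ∫ x, φ (smoothedCDF G H p s K h (s x)) ∂G

/-!
By Fubini, `F̃_{s,h}(t) = ∫ K(v) F_s(t - h v) dv`. The derivative of `F_s` is the density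
`max f_s 0` (only `ofReal ∘ f_s` is prescribed), which is `M`-Lipschitz, so
`F_s(t - h v) = F_s(t) - h v F_s'(t) + r(v)` with `|r(v)| ≤ (M/2) h² v²`. The symmetric kernel
kills the first-order term, hence `|F̃_{s,h} - F_s| ≤ (M/2) h² μ₂` uniformly. Both cdfs take values
in `[0,1]`, where `φ` is `‖φ'‖_∞`-Lipschitz by the mean value theorem; integrate over `X ~ G`.
-/

open ProbabilityTheory Set
open scoped ENNReal NNReal

lemma integral_abs_from_zero (c : ℝ) : ∫ w in (0 : ℝ)..c, |w| = c * |c| / 2 := by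
  rcases le_total 0 c with hc | hc
  · rw [intervalIntegral.integral_congr (g := fun w => w) fun w hw => abs_of_nonneg ?_,
      integral_id, abs_of_nonneg hc]
    · ring
    · exact (uIcc_of_le hc ▸ hw).1
  · rw [intervalIntegral.integral_congr (g := fun w => -w) fun w hw => abs_of_nonpos ?_,
      intervalIntegral.integral_neg, integral_id, abs_of_nonpos hc]
    · ring
    · exact (uIcc_of_ge hc ▸ hw).2

lemma abs_integral_sub_mul_le_of_lipschitzWith {g : ℝ → ℝ} {M : ℝ≥0} (hg : LipschitzWith M g)
    (t a : ℝ) : |(∫ w in t..t + a, g w) - a * g t| ≤ M / 2 * a ^ 2 := by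
  have hdev : (∫ w in t..t + a, g w) - a * g t = ∫ w in t..t + a, (g w - g t) := by
    rw [intervalIntegral.integral_sub (hg.continuous.intervalIntegrable _ _)
      intervalIntegrable_const,
      intervalIntegral.integral_const, smul_eq_mul, add_sub_cancel_left]
  calc |(∫ w in t..t + a, g w) - a * g t| ≤ |∫ w in t..t + a, (M : ℝ) * abs (w - t)| := by
        rw [hdev, ← Real.norm_eq_abs (∫ w in t..t + a, (g w - g t))]
        refine intervalIntegral.norm_integral_le_abs_of_norm_le
          (ae_of_all _ fun w => by simpa [Real.dist_eq] using hg.dist_le_mul w t) ?_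
        exact (continuous_const.mul (continuous_abs.comp (continuous_sub_right t)))
          |>.intervalIntegrable _ _
    _ = M / 2 * a ^ 2 := by
        rw [intervalIntegral.integral_const_mul,
          intervalIntegral.integral_comp_sub_right (fun w => |w|), sub_self, add_sub_cancel_left,
          integral_abs_from_zero, abs_mul, NNReal.abs_eq, abs_div, abs_mul, abs_abs,
          abs_mul_abs_self, abs_two]
        ring

section Kernel

variable {K : ℝ → ℝ}

lemma integral_id_mul_eq_zero_of_even (hK : ∀ u, K (-u) = K u) : ∫ v, v * K v = 0 := by
  have hneg := integral_neg_eq_self (fun v => v * K v) volume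
  simp only [hK, neg_mul, integral_neg] at hneg
  linarith

lemma MeasureTheory.Integrable.id_mul_of_sq_mul (hK : Integrable K)
    (hK₂ : Integrable fun v => v ^ 2 * K v) : Integrable fun v => v * K v := by
  refine (hK.norm.add hK₂.norm).mono' (by fun_prop) (ae_of_all _ fun v => ?_)
  calc ‖v * K v‖ ≤ (1 + v ^ 2) * ‖K v‖ := by
        rw [norm_mul]
        refine mul_le_mul_of_nonneg_right ?_ (norm_nonneg _)
        nlinarith [Real.norm_eq_abs v, sq_abs v, abs_nonneg v]
    _ = ‖K v‖ + ‖v ^ 2 * K v‖ := by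
        rw [norm_mul, Real.norm_of_nonneg (sq_nonneg v)]
        ring

lemma integral_setIntegral_Iic_div_eq_integral_mul_measureReal (μ : Measure ℝ) [IsFiniteMeasure μ]
    (hK : Integrable K) {h : ℝ} (hh : 0 < h) (t : ℝ) :
    ∫ u, (∫ v in Iic ((t - u) / h), K v) ∂μ = ∫ v, K v * μ.real (Iic (t - h * v)) := by
  set S : Set (ℝ × ℝ) := {q | q.1 + h * q.2 ≤ t}
  have hS : MeasurableSet S := measurableSet_le (by fun_prop) measurable_const
  have hint : Integrable (S.indicator fun q => K q.2) (μ.prod volume) :=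
    (hK.comp_snd μ).indicator hS
  have hslice_u :
      ∀ u, ∫ v, S.indicator (fun q => K q.2) (u, v) = ∫ v in Iic ((t - u) / h), K v := by
    intro u
    rw [← integral_indicator measurableSet_Iic]
    congr 1 with v
    simp only [S, indicator_apply, mem_ofPred_eq, mem_Iic, le_div_iff₀ hh, le_sub_iff_add_le',
      mul_comm v h]
  have hslice_v : ∀ v, ∫ u, S.indicator (fun q => K q.2) (u, v) ∂μ
      = K v * μ.real (Iic (t - h * v)) := by
    intro v
    rw [mul_comm, ← smul_eq_mul, ← setIntegral_const, ← integral_indicator measurableSet_Iic]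
    congr 1 with u
    simp only [S, indicator_apply, mem_ofPred_eq, mem_Iic, le_sub_iff_add_le]
  simp_rw [← hslice_u,
    integral_integral_swap (f := fun u v => S.indicator (fun q => K q.2) (u, v)) hint, hslice_v]

end Kernel

lemma cdf_sub_cdf_eq_intervalIntegral {μ : Measure ℝ} [IsProbabilityMeasure μ] {ρ : ℝ → ℝ}
    (hρ : Measurable ρ) (hμ : μ = volume.withDensity fun x => ENNReal.ofReal (ρ x)) (a b : ℝ) :
    cdf μ b - cdf μ a = ∫ w in a..b, max (ρ w) 0 := by
  have hpos : ∀ x, ENNReal.ofReal (ρ x) = ENNReal.ofReal (max (ρ x) 0) := by simp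
  simp_rw [hpos] at hμ
  have hmeas : Measurable fun x => max (ρ x) 0 := hρ.max measurable_const
  have hint : Integrable fun x => max (ρ x) 0 := by
    refine ⟨hmeas.aestronglyMeasurable, ?_⟩
    rw [hasFiniteIntegral_iff_ofReal (f := fun x => max (ρ x) 0)
      (ae_of_all _ fun x => le_max_right _ _), ← setLIntegral_univ,
      ← withDensity_apply _ MeasurableSet.univ, ← hμ, measure_univ]
    exact ENNReal.one_lt_top
  have hcdf : ∀ x, cdf μ x = ∫ w in Iic x, max (ρ w) 0 := by
    intro x
    rw [cdf_eq_real, measureReal_def, hμ, withDensity_apply _ measurableSet_Iic,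
      ← ofReal_integral_eq_lintegral_ofReal hint.integrableOn
        (ae_of_all _ fun x => le_max_right _ _),
      ENNReal.toReal_ofReal (setIntegral_nonneg measurableSet_Iic fun x _ => le_max_right _ _)]
  rw [hcdf, hcdf, intervalIntegral.integral_Iic_sub_Iic hint.integrableOn hint.integrableOn]

def kernelSmoothCDF (μ : Measure ℝ) (K : ℝ → ℝ) (h t : ℝ) : ℝ :=
  ∫ v, K v * cdf μ (t - h * v)

section KernelSmoothCDF

variable (μ : Measure ℝ) {K : ℝ → ℝ}

lemma integrable_mul_cdf_sub_mul (hK : Integrable K) (h t : ℝ) :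
    Integrable fun v => K v * cdf μ (t - h * v) :=
  hK.mul_bdd ((monotone_cdf μ).measurable.comp (by fun_prop)).aestronglyMeasurable
    (ae_of_all _ fun v => by
      simpa [abs_of_nonneg (cdf_nonneg μ _)] using cdf_le_one μ (t - h * v))

lemma kernelSmoothCDF_mem_Icc (hK₀ : ∀ u, 0 ≤ K u) (hK : Integrable K) (hK₁ : ∫ u, K u = 1)
    (h t : ℝ) : kernelSmoothCDF μ K h t ∈ Icc 0 1 := by
  refine ⟨integral_nonneg fun v => mul_nonneg (hK₀ v) (cdf_nonneg μ _), ?_⟩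
  rw [← hK₁]
  exact integral_mono (integrable_mul_cdf_sub_mul μ hK h t) hK fun v =>
    mul_le_of_le_one_right (hK₀ v) (cdf_le_one μ _)

lemma monotone_kernelSmoothCDF (hK₀ : ∀ u, 0 ≤ K u) (hK : Integrable K) (h : ℝ) :
    Monotone (kernelSmoothCDF μ K h) := fun a b hab =>
  integral_mono (integrable_mul_cdf_sub_mul μ hK h a) (integrable_mul_cdf_sub_mul μ hK h b)
    fun v => mul_le_mul_of_nonneg_left (monotone_cdf μ (by linarith)) (hK₀ v)

lemma abs_kernelSmoothCDF_sub_cdf_le (hK₀ : ∀ u, 0 ≤ K u) (hK : Integrable K)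
    (hK_even : ∀ u, K (-u) = K u) (hK₁ : ∫ u, K u = 1) (hK₂ : Integrable fun u => u ^ 2 * K u)
    {g : ℝ → ℝ} {M : ℝ≥0} (hg : LipschitzWith M g)
    (hdens : ∀ a b, cdf μ b - cdf μ a = ∫ w in a..b, g w) (h t : ℝ) :
    |kernelSmoothCDF μ K h t - cdf μ t| ≤ M / 2 * h ^ 2 * ∫ u, u ^ 2 * K u := by
  set F := cdf μ
  have htaylor : ∀ v, |F (t - h * v) - F t + h * v * g t| ≤ M / 2 * h ^ 2 * v ^ 2 := by
    intro v
    have := abs_integral_sub_mul_le_of_lipschitzWith hg t (-(h * v))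
    rwa [← sub_eq_add_neg, ← hdens, neg_mul, sub_neg_eq_add, neg_sq, mul_pow, ← mul_assoc] at this
  have hconst : ∫ v, K v * F t = F t := by rw [integral_mul_const, hK₁, one_mul]
  have hmoment : ∫ v, h * g t * (v * K v) = 0 := by
    rw [integral_const_mul, integral_id_mul_eq_zero_of_even hK_even, mul_zero]
  have hdecomp : kernelSmoothCDF μ K h t - F t
      = ∫ v, K v * (F (t - h * v) - F t + h * v * g t) := by
    calc kernelSmoothCDF μ K h t - F t
        = (∫ v, K v * F (t - h * v)) - (∫ v, K v * F t) + ∫ v, h * g t * (v * K v) := by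
          rw [hconst, hmoment, add_zero]; rfl
      _ = ∫ v, (K v * F (t - h * v) - K v * F t + h * g t * (v * K v)) := by
          rw [← integral_sub (integrable_mul_cdf_sub_mul μ hK h t) (hK.mul_const _)]
          exact (integral_add ((integrable_mul_cdf_sub_mul μ hK h t).sub (hK.mul_const _))
            ((hK.id_mul_of_sq_mul hK₂).const_mul _)).symm
      _ = ∫ v, K v * (F (t - h * v) - F t + h * v * g t) := by
          congr 1 with v
          ring
  rw [hdecomp, ← integral_const_mul]
  refine abs_integral_le_integral_abs.trans (integral_mono_of_nonneg (ae_of_all _ fun v =>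
    abs_nonneg _) (hK₂.const_mul _) (ae_of_all _ fun v => ?_))
  calc |K v * (F (t - h * v) - F t + h * v * g t)|
      ≤ K v * (M / 2 * h ^ 2 * v ^ 2) := by
        rw [abs_mul, abs_of_nonneg (hK₀ v)]
        exact mul_le_mul_of_nonneg_left (htaylor v) (hK₀ v)
    _ = M / 2 * h ^ 2 * (v ^ 2 * K v) := by ring

end KernelSmoothCDF

lemma abs_sub_le_iSup_abs_deriv_mul {φ φ' : ℝ → ℝ} {l r : ℝ}
    (hφ : ∀ x ∈ Icc l r, HasDerivAt φ (φ' x) x) (hφ' : ContinuousOn φ' (Icc l r))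
    {a b : ℝ} (ha : a ∈ Icc l r) (hb : b ∈ Icc l r) :
    |φ b - φ a| ≤ (⨆ u : Icc l r, |φ' u|) * |b - a| := by
  have hbdd : BddAbove (range fun u : Icc l r => |φ' u|) := by
    simpa only [image_eq_range] using (isCompact_Icc.image_of_continuousOn hφ'.abs).bddAbove
  simpa [Real.norm_eq_abs] using (convex_Icc l r).norm_image_sub_le_of_norm_hasDerivWithin_le
    (fun x hx => (hφ x hx).hasDerivWithinAt) (fun x hx => le_ciSup hbdd ⟨x, hx⟩) ha hb

lemma abs_integral_comp_sub_integral_comp_le {α : Type*} [MeasurableSpace α] (ν : Measure α)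
    [IsProbabilityMeasure ν] {φ : ℝ → ℝ} (hφ : Continuous φ) {C ε : ℝ} (hC : 0 ≤ C)
    (hφC : ∀ a ∈ Icc (0 : ℝ) 1, ∀ b ∈ Icc (0 : ℝ) 1, |φ b - φ a| ≤ C * |b - a|)
    {A B : α → ℝ} (hA : Measurable A) (hB : Measurable B)
    (hA₀₁ : ∀ x, A x ∈ Icc (0 : ℝ) 1) (hB₀₁ : ∀ x, B x ∈ Icc (0 : ℝ) 1)
    (hAB : ∀ x, |A x - B x| ≤ ε) :
    |∫ x, φ (A x) ∂ν - ∫ x, φ (B x) ∂ν| ≤ C * ε := by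
  obtain ⟨c, hc⟩ := isCompact_Icc.exists_bound_of_continuousOn hφ.continuousOn
  have hint : ∀ {Z : α → ℝ}, Measurable Z → (∀ x, Z x ∈ Icc (0 : ℝ) 1) →
      Integrable (fun x => φ (Z x)) ν := fun hZ hZ₀₁ =>
    .of_bound (hφ.measurable.comp hZ).aestronglyMeasurable c (ae_of_all _ fun x => hc _ (hZ₀₁ x))
  rw [← integral_sub (hint hA hA₀₁) (hint hB hB₀₁), ← Real.norm_eq_abs]
  calc ‖∫ x, (φ (A x) - φ (B x)) ∂ν‖ ≤ C * ε * ν.real univ :=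
        norm_integral_le_of_norm_le_const (ae_of_all _ fun x => ?_)
    _ = C * ε := by rw [probReal_univ, mul_one]
  calc |φ (A x) - φ (B x)| ≤ C * |A x - B x| := by
        simpa only [abs_sub_comm] using hφC _ (hB₀₁ x) _ (hA₀₁ x)
    _ ≤ C * ε := mul_le_mul_of_nonneg_left (hAB x) hC

def pooledMeasure {d : ℕ} (G H : Measure (Fin d → ℝ)) (p : ℝ) (s : (Fin d → ℝ) → ℝ) :
    Measure ℝ :=
  ENNReal.ofReal p • G.map s + ENNReal.ofReal (1 - p) • H.map s

section PooledMeasure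

variable {d : ℕ} (G H : Measure (Fin d → ℝ)) [IsProbabilityMeasure G] [IsProbabilityMeasure H]
  {p : ℝ} {s : (Fin d → ℝ) → ℝ}

lemma isProbabilityMeasure_pooledMeasure (hp₀ : 0 ≤ p) (hp₁ : p ≤ 1) (hs : Measurable s) :
    IsProbabilityMeasure (pooledMeasure G H p s) := by
  have := Measure.isProbabilityMeasure_map (μ := G) hs.aemeasurable
  have := Measure.isProbabilityMeasure_map (μ := H) hs.aemeasurable
  constructor
  rw [pooledMeasure, Measure.add_apply, Measure.smul_apply, Measure.smul_apply, measure_univ,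
    measure_univ, smul_eq_mul, smul_eq_mul, mul_one, mul_one,
    ← ENNReal.ofReal_add hp₀ (by linarith), add_sub_cancel, ENNReal.ofReal_one]

lemma pooledCDF_eq_cdf (hp₀ : 0 ≤ p) (hp₁ : p ≤ 1) (hs : Measurable s) (t : ℝ) :
    pooledCDF G H p s t = cdf (pooledMeasure G H p s) t := by
  have := isProbabilityMeasure_pooledMeasure G H hp₀ hp₁ hs
  rw [cdf_eq_real, pooledMeasure, measureReal_add_apply
    (ENNReal.mul_ne_top ENNReal.ofReal_ne_top (measure_ne_top _ _))
    (ENNReal.mul_ne_top ENNReal.ofReal_ne_top (measure_ne_top _ _)),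
    measureReal_ennreal_smul_apply, measureReal_ennreal_smul_apply, ENNReal.toReal_ofReal hp₀,
    ENNReal.toReal_ofReal (by linarith)]
  rfl

lemma smoothedCDF_eq_kernelSmoothCDF (hp₀ : 0 ≤ p) (hp₁ : p ≤ 1) (hs : Measurable s)
    {K : ℝ → ℝ} (hK : Integrable K) {h : ℝ} (hh : 0 < h) (t : ℝ) :
    smoothedCDF G H p s K h t = kernelSmoothCDF (pooledMeasure G H p s) K h t := by
  have := isProbabilityMeasure_pooledMeasure G H hp₀ hp₁ hs
  simp only [kernelSmoothCDF, cdf_eq_real]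
  exact integral_setIntegral_Iic_div_eq_integral_mul_measureReal (pooledMeasure G H p s) hK hh t

end PooledMeasure

/-- bias of the kernel-smoothed ranking criterion:
`|W̃_{φ,h}(s) − W_φ(s)| ≤ ‖φ'‖_∞·(M/2)·h²·μ₂`. -/
theorem stmt13 {d : ℕ} (G H : Measure (Fin d → ℝ))
    [IsProbabilityMeasure G] [IsProbabilityMeasure H]
    (p : ℝ) (hp : p ∈ Set.Ioo (0 : ℝ) 1)
    (s : (Fin d → ℝ) → ℝ) (hs : Measurable s)
    (fs fs' : ℝ → ℝ) (M : ℝ)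
    (hfs : (ENNReal.ofReal p • G.map s + ENNReal.ofReal (1 - p) • H.map s)
            = MeasureTheory.volume.withDensity fun t => ENNReal.ofReal (fs t))
    (hfsd : ∀ t, HasDerivAt fs (fs' t) t) (hfs'bdd : ∀ t, |fs' t| ≤ M)
    (φ φd : ℝ → ℝ) (hφd : ∀ t, HasDerivAt φ (φd t) t) (hφdc : Continuous φd)
    (K : ℝ → ℝ) (hKpos : ∀ u, 0 ≤ K u) (hKint : Integrable K)
    (hKsymm : ∀ u, K (-u) = K u)
    (hKone : (∫ u, K u) = 1)
    (hKmom : Integrable fun u => u ^ 2 * K u)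
    (h : ℝ) (hh : 0 < h) :
    |Wsmooth G H p φ s K h - Wperf G H p φ s|
      ≤ (⨆ u : Set.Icc (0 : ℝ) 1, |φd u|) * (M / 2) * h ^ 2 * ∫ u, u ^ 2 * K u := by
  obtain ⟨hp₀, hp₁⟩ := hp
  set μ := pooledMeasure G H p s
  have : IsProbabilityMeasure μ := isProbabilityMeasure_pooledMeasure G H hp₀.le hp₁.le hs
  have hM : 0 ≤ M := (abs_nonneg _).trans (hfs'bdd 0)
  have hfs_lip : LipschitzWith M.toNNReal fs :=
    lipschitzWith_of_nnnorm_deriv_le (fun t => (hfsd t).differentiableAt) fun t => by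
      rw [(hfsd t).deriv, ← NNReal.coe_le_coe, coe_nnnorm, Real.coe_toNNReal _ hM,
        Real.norm_eq_abs]
      exact hfs'bdd t
  have hbias (t : ℝ) :
      |kernelSmoothCDF μ K h t - cdf μ t| ≤ M / 2 * h ^ 2 * ∫ u, u ^ 2 * K u := by
    simpa [Real.coe_toNNReal _ hM] using abs_kernelSmoothCDF_sub_cdf_le μ hKpos hKint hKsymm
      hKone hKmom (hfs_lip.max_const 0)
      (cdf_sub_cdf_eq_intervalIntegral hfs_lip.continuous.measurable hfs) h t
  simp only [Wsmooth, Wperf, smoothedCDF_eq_kernelSmoothCDF G H hp₀.le hp₁.le hs hKint hh,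
    pooledCDF_eq_cdf G H hp₀.le hp₁.le hs]
  refine (abs_integral_comp_sub_integral_comp_le G
    (continuous_iff_continuousAt.2 fun t => (hφd t).continuousAt)
    (Real.iSup_nonneg fun _ => abs_nonneg _)
    (fun a ha b hb => abs_sub_le_iSup_abs_deriv_mul (fun x _ => hφd x) hφdc.continuousOn ha hb)
    ((monotone_kernelSmoothCDF μ hKpos hKint h).measurable.comp hs)
    ((monotone_cdf μ).measurable.comp hs)
    (fun x => kernelSmoothCDF_mem_Icc μ hKpos hKint hKone h _)
    (fun x => ⟨cdf_nonneg μ _, cdf_le_one μ _⟩) (fun x => hbias (s x))).trans_eq ?_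
  ring
end
end

section
/- Let φ : [0,1] → ℝ be continuously differentiable with ‖φ'‖_∞ = sup_{u∈[0,1]}|φ'(u)| < ∞, and let n, m ≥ 1, N = n + m. For x ∈ ℝⁿ and y ∈ ℝ^m define Rank_i(x,y) = #{k ≤ n : x_k ≤ x_i} + #{j ≤ m : y_j ≤ x_i} and Ŵ(x,y) = Σ_{i=1}^n φ(Rank_i(x,y)/(N+1)). Then: (a) if y, y' ∈ ℝ^m differ in exactly one coordinate, |Ŵ(x,y) − Ŵ(x,y')| ≤ n·‖φ'‖_∞/(N+1); (b) if x, x' ∈ ℝⁿ differ in exactly one coordinate, |Ŵ(x,y) − Ŵ(x',y)| ≤ ‖φ'‖_∞·(1 + (n−1)/(N+1)). -/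
/-!
Changing one observation moves the rank of every other `x i` in the pooled sample by at most
one, so by the mean value theorem each score `φ (Rank / (N + 1))` moves by at most
`‖φ'‖_∞ / (N + 1)`. The score of a changed `x i₀` moves by at most `‖φ'‖_∞`, since both of its
arguments lie in `[0, 1]`.
-/

open Finset

noncomputable section

/-- rank of `x i` in the pooled sample: number of pooled observations `≤ x i`. -/
def Rank {n m : ℕ} (x : Fin n → ℝ) (y : Fin m → ℝ) (i : Fin n) : ℕ :=
  (Finset.univ.filter fun k => x k ≤ x i).card +
    (Finset.univ.filter fun j => y j ≤ x i).card

/-- two-sample linear rank statistic with score-generating function `φ`. -/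
def Wemp {n m : ℕ} (φ : ℝ → ℝ) (x : Fin n → ℝ) (y : Fin m → ℝ) : ℝ :=
  ∑ i : Fin n, φ ((Rank x y i : ℝ) / ((n : ℝ) + (m : ℝ) + 1))

theorem card_filter_le_card_filter_add_one {α : Type*} [DecidableEq α] (s : Finset α)
    {p q : α → Prop} [DecidablePred p] [DecidablePred q] (a : α)
    (h : ∀ k ∈ s, k ≠ a → p k → q k) :
    (s.filter p).card ≤ (s.filter q).card + 1 := by
  have hsub : s.filter p ⊆ insert a (s.filter q) := by
    intro k hk
    rw [mem_filter] at hk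
    rcases eq_or_ne k a with rfl | hka
    · exact mem_insert_self _ _
    · exact mem_insert_of_mem (mem_filter.mpr ⟨hk.1, h k hk.1 hka hk.2⟩)
  exact (card_le_card hsub).trans (card_insert_le _ _)

section Rank

variable {n m : ℕ}

theorem rank_le_add (x : Fin n → ℝ) (y : Fin m → ℝ) (i : Fin n) : Rank x y i ≤ n + m := by
  have hx := card_filter_le (univ : Finset (Fin n)) fun k => x k ≤ x i
  have hy := card_filter_le (univ : Finset (Fin m)) fun j => y j ≤ x i
  simp only [card_univ, Fintype.card_fin] at hx hy
  unfold Rank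
  omega

theorem rank_div_mem_Icc (x : Fin n → ℝ) (y : Fin m → ℝ) (i : Fin n) :
    (Rank x y i : ℝ) / ((n : ℝ) + m + 1) ∈ Set.Icc (0 : ℝ) 1 := by
  refine ⟨by positivity, (div_le_one (by positivity)).mpr ?_⟩
  have : (Rank x y i : ℝ) ≤ n + m := by exact_mod_cast rank_le_add x y i
  linarith

theorem rank_le_rank_add_one_of_eq_off_y {x : Fin n → ℝ} {y y' : Fin m → ℝ} {j₀ : Fin m}
    (hy : ∀ j, j ≠ j₀ → y j = y' j) (i : Fin n) :
    Rank x y i ≤ Rank x y' i + 1 := by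
  have := card_filter_le_card_filter_add_one univ (p := fun j => y j ≤ x i)
    (q := fun j => y' j ≤ x i) j₀ fun j _ hj hle => hy j hj ▸ hle
  unfold Rank
  omega

theorem rank_le_rank_add_one_of_eq_off_x {x x' : Fin n → ℝ} {y : Fin m → ℝ} {i₀ i : Fin n}
    (hx : ∀ k, k ≠ i₀ → x k = x' k) (hi : i ≠ i₀) :
    Rank x y i ≤ Rank x' y i + 1 := by
  have := card_filter_le_card_filter_add_one univ (p := fun k => x k ≤ x i)
    (q := fun k => x' k ≤ x' i) i₀ fun k _ hk hle => hx k hk ▸ hx i hi ▸ hle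
  have hy : (univ.filter fun j => y j ≤ x i).card = (univ.filter fun j => y j ≤ x' i).card :=
    by rw [hx i hi]
  unfold Rank
  omega

end Rank

theorem abs_le_iSup_Icc {f : ℝ → ℝ} (hf : Continuous f) {u : ℝ} (hu : u ∈ Set.Icc (0 : ℝ) 1) :
    |f u| ≤ ⨆ v : Set.Icc (0 : ℝ) 1, |f v| :=
  le_ciSup (f := fun v : Set.Icc (0 : ℝ) 1 => |f v|)
    (isCompact_range (by fun_prop)).bddAbove ⟨u, hu⟩

section Score

variable {φ φd : ℝ → ℝ} {C : ℝ}

theorem abs_sub_le_mul_of_mem_Icc (hφd : ∀ t, HasDerivAt φ (φd t) t)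
    (hC : ∀ u ∈ Set.Icc (0 : ℝ) 1, |φd u| ≤ C) {a b : ℝ}
    (ha : a ∈ Set.Icc (0 : ℝ) 1) (hb : b ∈ Set.Icc (0 : ℝ) 1) :
    |φ a - φ b| ≤ C * |a - b| :=
  (convex_Icc 0 1).norm_image_sub_le_of_norm_hasDerivWithin_le
    (fun u _ => (hφd u).hasDerivWithinAt) hC hb ha

theorem abs_sub_le_of_mem_Icc (hφd : ∀ t, HasDerivAt φ (φd t) t)
    (hC : ∀ u ∈ Set.Icc (0 : ℝ) 1, |φd u| ≤ C) {a b : ℝ}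
    (ha : a ∈ Set.Icc (0 : ℝ) 1) (hb : b ∈ Set.Icc (0 : ℝ) 1) :
    |φ a - φ b| ≤ C := by
  have hC0 : 0 ≤ C := (abs_nonneg _).trans (hC 0 (Set.left_mem_Icc.mpr zero_le_one))
  calc |φ a - φ b| ≤ C * |a - b| := abs_sub_le_mul_of_mem_Icc hφd hC ha hb
    _ ≤ C * 1 := by gcongr; exact abs_sub_le_of_nonneg_of_le ha.1 ha.2 hb.1 hb.2
    _ = C := mul_one C

theorem abs_sub_div_le_div_of_mem_Icc (hφd : ∀ t, HasDerivAt φ (φd t) t)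
    (hC : ∀ u ∈ Set.Icc (0 : ℝ) 1, |φd u| ≤ C) {r r' : ℕ} {N : ℝ} (hN : 0 < N)
    (hr : r / N ∈ Set.Icc (0 : ℝ) 1) (hr' : r' / N ∈ Set.Icc (0 : ℝ) 1)
    (hle : r ≤ r' + 1) (hle' : r' ≤ r + 1) :
    |φ (r / N) - φ (r' / N)| ≤ C / N := by
  have hdiff : |(r : ℝ) - r'| ≤ 1 := by
    have h : (r : ℝ) ≤ r' + 1 := by exact_mod_cast hle
    have h' : (r' : ℝ) ≤ r + 1 := by exact_mod_cast hle'
    exact abs_sub_le_iff.mpr ⟨by linarith, by linarith⟩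
  calc |φ (r / N) - φ (r' / N)| ≤ C * |r / N - r' / N| :=
        abs_sub_le_mul_of_mem_Icc hφd hC hr hr'
    _ = C * |(r : ℝ) - r'| / N := by
        rw [div_sub_div_same, abs_div, abs_of_pos hN, mul_div_assoc]
    _ ≤ C * 1 / N := by
        have hC0 : 0 ≤ C := (abs_nonneg _).trans (hC 0 (Set.left_mem_Icc.mpr zero_le_one))
        gcongr
    _ = C / N := by rw [mul_one]

theorem abs_wemp_sub_le {n m : ℕ} (hφd : ∀ t, HasDerivAt φ (φd t) t)
    (hC : ∀ u ∈ Set.Icc (0 : ℝ) 1, |φd u| ≤ C) {x x' : Fin n → ℝ} {y y' : Fin m → ℝ}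
    (s : Finset (Fin n))
    (hs : ∀ i ∉ s, Rank x y i ≤ Rank x' y' i + 1 ∧ Rank x' y' i ≤ Rank x y i + 1) :
    |Wemp φ x y - Wemp φ x' y'| ≤ s.card * C + sᶜ.card * (C / ((n : ℝ) + m + 1)) := by
  set f : Fin n → ℝ := fun i =>
    φ ((Rank x y i : ℝ) / ((n : ℝ) + m + 1)) - φ ((Rank x' y' i : ℝ) / ((n : ℝ) + m + 1))
  have hsplit : Wemp φ x y - Wemp φ x' y' = ∑ i ∈ s, f i + ∑ i ∈ sᶜ, f i := by
    rw [sum_add_sum_compl, Wemp, Wemp, ← sum_sub_distrib]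
  have hin : ∑ i ∈ s, |f i| ≤ s.card * C := by
    simpa using sum_le_card_nsmul s (fun i => |f i|) C fun i _ =>
      abs_sub_le_of_mem_Icc hφd hC (rank_div_mem_Icc x y i) (rank_div_mem_Icc x' y' i)
  have hout : ∑ i ∈ sᶜ, |f i| ≤ sᶜ.card * (C / ((n : ℝ) + m + 1)) := by
    simpa using sum_le_card_nsmul sᶜ (fun i => |f i|) _ fun i hi =>
      abs_sub_div_le_div_of_mem_Icc hφd hC (by positivity) (rank_div_mem_Icc x y i)
        (rank_div_mem_Icc x' y' i) (hs i (mem_compl.mp hi)).1 (hs i (mem_compl.mp hi)).2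
  rw [hsplit]
  calc |∑ i ∈ s, f i + ∑ i ∈ sᶜ, f i| ≤ |∑ i ∈ s, f i| + |∑ i ∈ sᶜ, f i| := abs_add_le _ _
    _ ≤ ∑ i ∈ s, |f i| + ∑ i ∈ sᶜ, |f i| :=
        add_le_add (abs_sum_le_sum_abs _ _) (abs_sum_le_sum_abs _ _)
    _ ≤ _ := add_le_add hin hout

end Score

theorem stmt15_general (φ φd : ℝ → ℝ)
    (hφd : ∀ t, HasDerivAt φ (φd t) t) (hφdc : Continuous φd)
    (n m : ℕ) :
    (∀ (x : Fin n → ℝ) (y y' : Fin m → ℝ),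
      (∃ j₀ : Fin m, y j₀ ≠ y' j₀ ∧ ∀ j : Fin m, j ≠ j₀ → y j = y' j) →
      |Wemp φ x y - Wemp φ x y'|
        ≤ (n : ℝ) * (⨆ u : Set.Icc (0 : ℝ) 1, |φd u|) / ((n : ℝ) + (m : ℝ) + 1)) ∧
    (∀ (x x' : Fin n → ℝ) (y : Fin m → ℝ),
      (∃ i₀ : Fin n, x i₀ ≠ x' i₀ ∧ ∀ i : Fin n, i ≠ i₀ → x i = x' i) →
      |Wemp φ x y - Wemp φ x' y|
        ≤ (⨆ u : Set.Icc (0 : ℝ) 1, |φd u|)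
            * (1 + ((n : ℝ) - 1) / ((n : ℝ) + (m : ℝ) + 1))) := by
  have hC := fun u (hu : u ∈ Set.Icc (0 : ℝ) 1) => abs_le_iSup_Icc hφdc hu
  constructor
  · rintro x y y' ⟨j₀, -, hy⟩
    have := abs_wemp_sub_le hφd hC (x' := x) ∅ fun i _ =>
      ⟨rank_le_rank_add_one_of_eq_off_y hy i,
        rank_le_rank_add_one_of_eq_off_y (fun j hj => (hy j hj).symm) i⟩
    simpa [mul_div_assoc] using this
  · rintro x x' y ⟨i₀, -, hx⟩
    have := abs_wemp_sub_le hφd hC (y' := y) {i₀} fun i hi =>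
      ⟨rank_le_rank_add_one_of_eq_off_x hx (mem_singleton.not.mp hi),
        rank_le_rank_add_one_of_eq_off_x (fun k hk => (hx k hk).symm) (mem_singleton.not.mp hi)⟩
    rw [card_compl, card_singleton, Fintype.card_fin, Nat.cast_sub i₀.pos] at this
    convert this using 1
    ring

/-- bounded differences for the two-sample linear rank statistic. -/
theorem stmt15 (φ φd : ℝ → ℝ)
    (hφd : ∀ t, HasDerivAt φ (φd t) t) (hφdc : Continuous φd)
    (n m : ℕ) (hn : 1 ≤ n) (hm : 1 ≤ m) :
    (∀ (x : Fin n → ℝ) (y y' : Fin m → ℝ),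
      (∃ j₀ : Fin m, y j₀ ≠ y' j₀ ∧ ∀ j : Fin m, j ≠ j₀ → y j = y' j) →
      |Wemp φ x y - Wemp φ x y'|
        ≤ (n : ℝ) * (⨆ u : Set.Icc (0 : ℝ) 1, |φd u|) / ((n : ℝ) + (m : ℝ) + 1)) ∧
    (∀ (x x' : Fin n → ℝ) (y : Fin m → ℝ),
      (∃ i₀ : Fin n, x i₀ ≠ x' i₀ ∧ ∀ i : Fin n, i ≠ i₀ → x i = x' i) →
      |Wemp φ x y - Wemp φ x' y|
        ≤ (⨆ u : Set.Icc (0 : ℝ) 1, |φd u|)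
            * (1 + ((n : ℝ) - 1) / ((n : ℝ) + (m : ℝ) + 1))) :=
  stmt15_general φ φd hφd hφdc n m
end
end
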